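/- arXiv:2605.31379 — 5 statements merged into one kernel-verified Lean document; each statement's English description precedes it below -/
import Mathlib

section
/- For any natural number n ≥ 3, the integral of Φ_n(y)·|y| over [-π, π) is at most 3π²·(log n)/n, where Φ_n is the n-th Fejér kernel. -/
open Real MeasureTheory

/-- The `n`-th Fejér kernel `Φ_n(y) = (1/n)·sin²(ny/2)/sin²(y/2)`, extended by `Φ_n(0) = n`. -/
noncomputable def fejerKernel (n : ℕ) (y : ℝ) : ℝ :=
  if y = 0 then n else (1 / n) * Real.sin (n * y / 2) ^ 2 / Real.sin (y / 2) ^ 2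

/-!
From `|sin (n x)| ≤ n |sin x|` we get `Φ_n ≤ n`, and Jordan's inequality `sin (y/2) ≥ y/π` gives
`Φ_n(y) ≤ π² / (n y²)` on `(0, π]`. As `Φ_n(y)|y|` is even, the integral is `2 ∫₀^π Φ_n(y) y`,
and using the first bound below `π/n` and the second above it, this is at most
`2 (∫₀^{π/n} n y + ∫_{π/n}^π π² / (n y)) = π² (1 + 2 log n) / n ≤ 3 π² log n / n`,
since `log n ≥ 1` for `n ≥ 3`.
-/

open intervalIntegral

theorem intervalIntegral.integral_eq_two_mul_of_even {f : ℝ → ℝ} (hf : ∀ x, f (-x) = f x)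
    {c : ℝ} (hfi : IntervalIntegrable f volume (-c) c) :
    ∫ x in -c..c, f x = 2 * ∫ x in 0..c, f x := by
  have hzero : (0 : ℝ) ∈ Set.uIcc (-c) c := by
    rcases le_total 0 c with h | h <;> simp [h]
  rw [← integral_add_adjacent_intervals (hfi.mono_set (Set.uIcc_subset_uIcc_left hzero))
    (hfi.mono_set (Set.uIcc_subset_uIcc_right hzero)), two_mul]
  congr 1
  simpa [hf] using (integral_comp_neg (a := 0) (b := c) f).symm

lemma abs_sin_nat_mul_le (k : ℕ) (x : ℝ) : |sin (k * x)| ≤ k * |sin x| := by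
  induction k with
  | zero => simp
  | succ k ih =>
    calc |sin ((k + 1 : ℕ) * x)| = |sin (k * x) * cos x + cos (k * x) * sin x| := by
          push_cast; rw [add_mul, one_mul, sin_add]
      _ ≤ |sin (k * x)| * |cos x| + |cos (k * x)| * |sin x| := by
          rw [← abs_mul, ← abs_mul]; exact abs_add_le _ _
      _ ≤ k * |sin x| * 1 + 1 * |sin x| := by
          gcongr
          exacts [abs_cos_le_one x, abs_cos_le_one _]
      _ = (k + 1 : ℕ) * |sin x| := by push_cast; ring

lemma fejerKernel_neg (n : ℕ) (y : ℝ) : fejerKernel n (-y) = fejerKernel n y := by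
  simp [fejerKernel, mul_neg, neg_div, sin_neg]

lemma fejerKernel_nonneg (n : ℕ) (y : ℝ) : 0 ≤ fejerKernel n y := by
  unfold fejerKernel; split_ifs <;> positivity

lemma fejerKernel_le (n : ℕ) (y : ℝ) : fejerKernel n y ≤ n := by
  rw [fejerKernel]
  split_ifs with hy
  · rfl
  have hsin : sin (n * y / 2) ^ 2 ≤ n ^ 2 * sin (y / 2) ^ 2 := by
    rw [← sq_abs, ← sq_abs (sin (y / 2)), ← mul_pow, mul_div_assoc]
    gcongr
    exact abs_sin_nat_mul_le n (y / 2)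
  rcases eq_or_ne (sin (y / 2)) 0 with h | h
  · simp [h]
  rcases eq_or_ne n 0 with rfl | hn
  · simp
  rw [div_le_iff₀ (by positivity)]
  calc 1 / n * sin (n * y / 2) ^ 2 ≤ 1 / n * (n ^ 2 * sin (y / 2) ^ 2) := by gcongr
    _ = n * sin (y / 2) ^ 2 := by field_simp

lemma fejerKernel_le_pi_sq_div (n : ℕ) {y : ℝ} (hy : 0 < y) (hyπ : y ≤ π) :
    fejerKernel n y ≤ π ^ 2 / (n * y ^ 2) := by
  have hjordan : y / π ≤ sin (y / 2) := by
    have := mul_le_sin (x := y / 2) (by positivity) (by linarith)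
    rwa [show 2 / π * (y / 2) = y / π by ring] at this
  rw [fejerKernel, if_neg hy.ne']
  calc 1 / n * sin (n * y / 2) ^ 2 / sin (y / 2) ^ 2 ≤ 1 / n * 1 / (y / π) ^ 2 := by
        gcongr
        exact sin_sq_le_one _
    _ = π ^ 2 / (n * y ^ 2) := by rw [div_pow, div_div_eq_mul_div]; ring

lemma measurable_fejerKernel (n : ℕ) : Measurable (fejerKernel n) :=
  Measurable.ite (measurableSet_singleton 0) measurable_const (by fun_prop)

lemma intervalIntegrable_fejerKernel (n : ℕ) (a b : ℝ) :
    IntervalIntegrable (fejerKernel n) volume a b := by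
  rw [intervalIntegrable_iff]
  refine IntegrableOn.of_bound measure_Ioc_lt_top
    (measurable_fejerKernel n).aestronglyMeasurable n (ae_of_all _ fun y => ?_)
  rw [Real.norm_of_nonneg (fejerKernel_nonneg n y)]
  exact fejerKernel_le n y

lemma integral_fejerKernel_mul_le (n : ℕ) (hn : 1 ≤ n) :
    ∫ y in 0..π, fejerKernel n y * y ≤ π ^ 2 / n * (log n + 1 / 2) := by
  have hn0 : (0 : ℝ) < n := by exact_mod_cast hn
  set a := π / n with ha
  have ha0 : 0 < a := by positivity
  have haπ : a ≤ π := div_le_self pi_pos.le (by exact_mod_cast hn)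
  have hint (c d : ℝ) : IntervalIntegrable (fun y => fejerKernel n y * y) volume c d :=
    (intervalIntegrable_fejerKernel n c d).mul_continuousOn continuousOn_id
  have near : ∫ y in 0..a, fejerKernel n y * y ≤ ∫ y in 0..a, n * y :=
    integral_mono_on ha0.le (hint _ _) ((continuous_const_mul _).intervalIntegrable _ _)
      fun y hy => mul_le_mul_of_nonneg_right (fejerKernel_le n y) hy.1
  have far : ∫ y in a..π, fejerKernel n y * y ≤ ∫ y in a..π, π ^ 2 / n * y⁻¹ := by
    refine integral_mono_on haπ (hint _ _) ?_ fun y hy => ?_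
    · refine (intervalIntegrable_inv (fun y hy => ?_) continuousOn_id).const_mul _
      rw [Set.uIcc_of_le haπ] at hy
      exact (ha0.trans_le hy.1).ne'
    · have hy0 : 0 < y := ha0.trans_le hy.1
      calc fejerKernel n y * y ≤ π ^ 2 / (n * y ^ 2) * y := by
            gcongr; exact fejerKernel_le_pi_sq_div n hy0 hy.2
        _ = π ^ 2 / n * y⁻¹ := by field_simp
  rw [intervalIntegral.integral_const_mul, integral_id] at near
  rw [intervalIntegral.integral_const_mul, integral_inv_of_pos ha0 pi_pos,
    show π / a = n by rw [ha]; field_simp] at far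
  rw [← integral_add_adjacent_intervals (hint 0 a) (hint a π)]
  have : (n : ℝ) * ((a ^ 2 - 0 ^ 2) / 2) = π ^ 2 / n * (1 / 2) := by rw [ha]; field_simp; ring
  linarith

theorem integral_fejer_mul_abs_le (n : ℕ) (hn : 3 ≤ n) :
    ∫ y in Set.Ico (-π) π, fejerKernel n y * |y| ≤ 3 * π ^ 2 * Real.log n / n := by
  have hlog : 1 ≤ log n := by
    rw [le_log_iff_exp_le (by positivity)]
    linarith [exp_one_lt_d9, (Nat.ofNat_le_cast.2 hn : (3 : ℝ) ≤ n)]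
  have hint : IntervalIntegrable (fun y => fejerKernel n y * |y|) volume (-π) π :=
    (intervalIntegrable_fejerKernel n _ _).mul_continuousOn continuous_abs.continuousOn
  have habs : ∫ y in 0..π, fejerKernel n y * |y| = ∫ y in 0..π, fejerKernel n y * y :=
    integral_congr fun y hy => by rw [abs_of_nonneg (Set.uIcc_of_le pi_pos.le ▸ hy).1]
  rw [restrict_Ico_eq_restrict_Ioc, ← integral_of_le (by linarith [pi_pos]),
    integral_eq_two_mul_of_even (fun y => by rw [fejerKernel_neg, abs_neg]) hint, habs]
  calc 2 * ∫ y in 0..π, fejerKernel n y * y ≤ 2 * (π ^ 2 / n * (log n + 1 / 2)) := by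
        gcongr; exact integral_fejerKernel_mul_le n (by omega)
    _ = π ^ 2 / n * (2 * log n + 1) := by ring
    _ ≤ π ^ 2 / n * (3 * log n) := by gcongr; linarith
    _ = 3 * π ^ 2 * log n / n := by ring
end

section
/- Let Q, R be self-adjoint operators on a finite-dimensional Hilbert space H with 0 < Q < I and 0 < R < I, and let α > 0. Then the Petz-type Rényi quantity of the quasi-free density operators satisfies Tr(ω̂_Q^α ω̂_R^{1-α}) = det[Q^α R^{1-α} + (I-Q)^α (I-R)^{1-α}], where ω̂_Q = det(I-Q)·Γ(Q(I-Q)^{-1}) and similarly for ω̂_R. -/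
open scoped ComplexOrder

/-- Real power of a (positive) matrix via the continuous functional calculus. -/
noncomputable def mrpow {n : Type*} [Fintype n] [DecidableEq n] (x : ℝ) (A : Matrix n n ℂ) :
    Matrix n n ℂ :=
  cfc (fun t : ℝ => t ^ x) A

/-- Logarithm of a (positive) matrix via the continuous functional calculus. -/
noncomputable def mlog {n : Type*} [Fintype n] [DecidableEq n] (A : Matrix n n ℂ) :
    Matrix n n ℂ :=
  cfc Real.log A

/-- Exponential of a (hermitian) matrix via the continuous functional calculus. -/
noncomputable def mexp {n : Type*} [Fintype n] [DecidableEq n] (A : Matrix n n ℂ) :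
    Matrix n n ℂ :=
  cfc Real.exp A

/-- The second quantization `Γ(A) = ⊕_k A^{∧k}` of a matrix `A`, expressed in the
occupation-number basis of the antisymmetric Fock space: its `(S, S')` entry is the minor
`det A[S, S']` when `|S| = |S'|`, and `0` otherwise. -/
noncomputable def gammaOp {ι : Type*} [Fintype ι] [DecidableEq ι] (A : Matrix ι ι ℂ) :
    Matrix (Finset ι) (Finset ι) ℂ :=
  fun S S' =>
    if h : S'.card = S.card then
      (A.submatrix (fun i : Fin S.card => (S.equivFin.symm i : ι))
        (fun i : Fin S.card => (S'.equivFin.symm (Fin.cast h.symm i) : ι))).det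
    else 0

/-- The quasi-free density operator `ω̂_Q = det(I-Q)·Γ(Q(I-Q)⁻¹)`. -/
noncomputable def qfDensity {ι : Type*} [Fintype ι] [DecidableEq ι] (Q : Matrix ι ι ℂ) :
    Matrix (Finset ι) (Finset ι) ℂ :=
  (1 - Q).det • gammaOp (Q * (1 - Q)⁻¹)

/-!
Diagonalise `Q = U diag(μ) U*`. The second quantization `Γ` is multiplicative (Cauchy–Binet),
commutes with `ᴴ` and sends diagonal matrices to diagonal ones, so
`ω̂_Q = Γ(U) diag(S ↦ ∏ᵢ (1 - μᵢ) ∏_{i ∈ S} μᵢ / (1 - μᵢ)) Γ(U)*`, whence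
`ω̂_Q^α = det((1 - Q)^α) Γ(A)` with `A = (Q (1 - Q)⁻¹)^α`; likewise
`ω̂_R^(1-α) = det((1 - R)^(1-α)) Γ(B)`. Then `Tr(Γ(A) Γ(B)) = Tr Γ(AB) = det(1 + AB)`, the trace of
`Γ(AB)` being the sum of the principal minors of `AB`. Finally `(1 - Q)^α A = Q^α` and
`B (1 - R)^(1-α) = R^(1-α)`, so `det((1 - Q)^α) det(1 + AB) det((1 - R)^(1-α))` is the determinant of
`(1 - Q)^α (1 - R)^(1-α) + Q^α R^(1-α)`.
-/

open Matrix Finset Function Unitary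
open scoped MatrixOrder

section Enum

variable {ι : Type*}

noncomputable def enum (S : Finset ι) {k : ℕ} (h : S.card = k) : Fin k → ι :=
  fun i => S.equivFin.symm (Fin.cast h.symm i)

lemma enum_injective (S : Finset ι) {k : ℕ} (h : S.card = k) : Injective (enum S h) := by
  intro i j hij
  simpa [enum] using Subtype.ext hij

lemma enum_mem (S : Finset ι) {k : ℕ} (h : S.card = k) (i : Fin k) : enum S h i ∈ S :=
  (S.equivFin.symm _).2

lemma exists_enum_eq {S : Finset ι} {k : ℕ} (h : S.card = k) {x : ι} (hx : x ∈ S) :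
    ∃ i, enum S h i = x :=
  ⟨Fin.cast h (S.equivFin ⟨x, hx⟩), by simp [enum]⟩

lemma sum_enum {M : Type*} [AddCommMonoid M] (S : Finset ι) {k : ℕ} (h : S.card = k)
    (g : ι → M) : ∑ i, g (enum S h i) = ∑ x ∈ S, g x := by
  subst h
  exact (Equiv.sum_comp S.equivFin.symm (g ∘ Subtype.val)).trans (sum_coe_sort S g)

lemma prod_enum {M : Type*} [CommMonoid M] (S : Finset ι) {k : ℕ} (h : S.card = k)
    (g : ι → M) : ∏ i, g (enum S h i) = ∏ x ∈ S, g x := by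
  subst h
  exact (Equiv.prod_comp S.equivFin.symm (g ∘ Subtype.val)).trans (prod_coe_sort S g)

lemma det_submatrix_enum {R : Type*} [CommRing R] (A : Matrix ι ι R) {S S' : Finset ι} {k m : ℕ}
    (hk : S.card = k) (hk' : S'.card = k) (hm : S.card = m) (hm' : S'.card = m) :
    (A.submatrix (enum S hk) (enum S' hk')).det = (A.submatrix (enum S hm) (enum S' hm')).det := by
  subst hk hm
  rfl

end Enum

section Minors

variable {ι R : Type*} [CommRing R]

lemma det_of_sum_mul {k : ℕ} (M : Matrix (Fin k) ι R) (N : Matrix ι (Fin k) R) (s : Finset ι) :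
    (of fun i j => ∑ x ∈ s, M i x * N x j).det =
      ∑ p ∈ Fintype.piFinset fun _ => s, (∏ i, M i (p i)) * (N.submatrix p id).det := by
  have hrows : (of fun i j => ∑ x ∈ s, M i x * N x j) = fun i => ∑ x ∈ s, M i x • N x := by
    ext i j
    simp [Finset.sum_apply]
  let D := (detRowAlternating : (Fin k → R) [⋀^Fin k]→ₗ[R] R).toMultilinearMap
  rw [hrows]
  change D (fun i => ∑ x ∈ s, M i x • N x) = _
  rw [D.map_sum_finset (fun i x => M i x • N x)]
  exact sum_congr rfl fun p _ => D.map_smul_univ (fun i => M i (p i)) (fun i => N (p i))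

variable [Fintype ι] [DecidableEq ι]

/-- Each injective `p : Fin k → ι` lies in `piFinset T` for exactly one `T` of size `k`,
namely its image. -/
lemma sum_card_eq_sum_piFinset {k : ℕ} (G : (Fin k → ι) → R)
    (hG : ∀ p, ¬ Injective p → G p = 0) :
    ∑ T : Finset ι, (if T.card = k then ∑ p ∈ Fintype.piFinset (fun _ => T), G p else 0) =
      ∑ p, G p := by
  have hsplit : ∀ T : Finset ι, (if T.card = k then ∑ p ∈ Fintype.piFinset (fun _ => T), G p
      else 0) = ∑ p, if T.card = k ∧ p ∈ Fintype.piFinset (fun _ => T) then G p else 0 := by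
    intro T
    split_ifs with hT
    · simp only [hT, true_and]
      rw [sum_ite_mem, univ_inter]
    · simp [hT]
  rw [sum_congr rfl fun T _ => hsplit T, sum_comm]
  refine sum_congr rfl fun p _ => ?_
  by_cases hp : Injective p
  · have himage : (univ.image p).card = k := by simp [card_image_of_injective _ hp]
    rw [sum_eq_single (univ.image p)]
    · simp [himage]
    · rintro T - hT
      refine if_neg fun ⟨hTk, hpT⟩ => hT (eq_of_subset_of_card_le ?_ (by rw [hTk, himage])).symm
      intro x hx
      obtain ⟨i, -, rfl⟩ := mem_image.mp hx
      exact Fintype.mem_piFinset.mp hpT i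
    · simp
  · simp [hG p hp]

theorem det_mul_eq_sum_minors {k : ℕ} (M : Matrix (Fin k) ι R) (N : Matrix ι (Fin k) R) :
    (M * N).det = ∑ T : Finset ι, if h : T.card = k then
      (M.submatrix id (enum T h)).det * (N.submatrix (enum T h) id).det else 0 := by
  set G : (Fin k → ι) → R := fun p => (∏ i, M i (p i)) * (N.submatrix p id).det
  have hG : ∀ p, ¬ Injective p → G p = 0 := by
    intro p hp
    obtain ⟨i, j, hij, hne⟩ := not_injective_iff.mp hp
    have hdet : (N.submatrix p id).det = 0 := det_zero_of_row_eq hne (by funext x; simp [hij])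
    simp [G, hdet]
  calc (M * N).det = ∑ p, G p := by
        rw [← Fintype.piFinset_univ, ← det_of_sum_mul]
        rfl
    _ = _ := by
        rw [← sum_card_eq_sum_piFinset G hG]
        refine sum_congr rfl fun T _ => ?_
        split_ifs with h
        · rw [← det_mul, ← det_of_sum_mul]
          congr 1
          ext i j
          simp [mul_apply, sum_enum T h fun x => M i x * N x j]
        · rfl

lemma det_one_add_eq_sum_minors {n R : Type*} [Fintype n] [DecidableEq n] [CommRing R]
    (M : Matrix n n R) :
    (1 + M).det = ∑ s : Finset n, (M.submatrix ((↑) : s → n) (↑)).det := by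
  let D := (detRowAlternating : (n → R) [⋀^n]→ₗ[R] R)
  rw [add_comm]
  change D (M.row + (1 : Matrix n n R).row) = _
  rw [D.map_add_univ]
  exact sum_congr rfl fun s _ => det_piecewise_one_eq_submatrix_det M s

end Minors

section SecondQuantization

variable {ι : Type*} [Fintype ι] [DecidableEq ι]

lemma gammaOp_apply (A : Matrix ι ι ℂ) (S S' : Finset ι) :
    gammaOp A S S' =
      if h : S'.card = S.card then (A.submatrix (enum S rfl) (enum S' h)).det else 0 :=
  rfl

lemma gammaOp_mul (M N : Matrix ι ι ℂ) : gammaOp (M * N) = gammaOp M * gammaOp N := by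
  ext S S'
  simp only [mul_apply, gammaOp_apply]
  split_ifs with h
  · rw [submatrix_mul _ _ _ id _ bijective_id, det_mul_eq_sum_minors]
    refine sum_congr rfl fun T _ => ?_
    by_cases hT : T.card = S.card
    · simp only [hT, h.trans hT.symm, dif_pos, submatrix_submatrix, comp_id, id_comp]
      rw [det_submatrix_enum N hT h rfl (h.trans hT.symm)]
    · simp [hT]
  · refine (sum_eq_zero fun T _ => ?_).symm
    by_cases hT : T.card = S.card
    · rw [dif_pos hT, dif_neg fun h' => h (h'.trans hT), mul_zero]
    · simp [hT]

lemma gammaOp_conjTranspose (A : Matrix ι ι ℂ) : gammaOp Aᴴ = (gammaOp A)ᴴ := by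
  ext S S'
  simp only [conjTranspose_apply, gammaOp_apply]
  split_ifs with h h' h'
  · rw [← conjTranspose_submatrix, det_conjTranspose, det_submatrix_enum A h rfl rfl h']
  · exact absurd h.symm h'
  · exact absurd h'.symm h
  · simp

lemma gammaOp_diagonal (v : ι → ℂ) :
    gammaOp (diagonal v) = diagonal fun S => ∏ i ∈ S, v i := by
  ext S S'
  rw [gammaOp_apply, diagonal_apply]
  split_ifs with h hS hS
  · subst hS
    rw [submatrix_diagonal _ _ (enum_injective S rfl), det_diagonal]
    exact prod_enum S rfl v
  · obtain ⟨x, hxS, hxS'⟩ : ∃ x ∈ S, x ∉ S' := not_subset.mp fun hsub =>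
      hS (eq_of_subset_of_card_le hsub h.le)
    obtain ⟨i, rfl⟩ := exists_enum_eq (rfl : S.card = S.card) hxS
    exact det_eq_zero_of_row_eq_zero i fun j =>
      diagonal_apply_ne _ fun hij => hxS' (hij ▸ enum_mem S' h j)
  · exact absurd (hS ▸ rfl) h
  · rfl

lemma gammaOp_one : gammaOp (1 : Matrix ι ι ℂ) = 1 := by
  rw [← diagonal_one, gammaOp_diagonal]
  simp

lemma trace_gammaOp (A : Matrix ι ι ℂ) : (gammaOp A).trace = (1 + A).det := by
  rw [det_one_add_eq_sum_minors, trace]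
  refine sum_congr rfl fun S _ => ?_
  rw [Matrix.diag_apply, gammaOp_apply, dif_pos rfl, ← det_submatrix_equiv_self S.equivFin.symm]
  rfl

lemma gammaOp_mem_unitary {U : Matrix ι ι ℂ} (hU : U ∈ unitary (Matrix ι ι ℂ)) :
    gammaOp U ∈ unitary (Matrix (Finset ι) (Finset ι) ℂ) := by
  rw [Unitary.mem_iff, star_eq_conjTranspose, ← gammaOp_conjTranspose, ← gammaOp_mul,
    ← gammaOp_mul, ← star_eq_conjTranspose, star_mul_self_of_mem hU, mul_star_self_of_mem hU,
    gammaOp_one]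
  exact ⟨rfl, rfl⟩

noncomputable def gammaUnitary (U : unitary (Matrix ι ι ℂ)) :
    unitary (Matrix (Finset ι) (Finset ι) ℂ) :=
  ⟨gammaOp U, gammaOp_mem_unitary U.2⟩

lemma gammaOp_conjStarAlgAut (U : unitary (Matrix ι ι ℂ)) (A : Matrix ι ι ℂ) :
    gammaOp (conjStarAlgAut ℂ _ U A) = conjStarAlgAut ℂ _ (gammaUnitary U) (gammaOp A) := by
  simp only [conjStarAlgAut_apply, gammaOp_mul, star_eq_conjTranspose, gammaOp_conjTranspose]
  rfl

end SecondQuantization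

section Conjugation

variable {ι : Type*} [Fintype ι] [DecidableEq ι] (U : unitary (Matrix ι ι ℂ))

lemma det_conjStarAlgAut (A : Matrix ι ι ℂ) : (conjStarAlgAut ℂ _ U A).det = A.det := by
  rw [conjStarAlgAut_apply, det_mul_comm, ← mul_assoc, coe_star_mul_self, one_mul]

lemma conjStarAlgAut_diagonal_mul (a b : ι → ℝ) :
    conjStarAlgAut ℂ _ U (diagonal fun i => (a i : ℂ)) *
        conjStarAlgAut ℂ _ U (diagonal fun i => (b i : ℂ)) =
      conjStarAlgAut ℂ _ U (diagonal fun i => ((a i * b i : ℝ) : ℂ)) := by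
  rw [← map_mul, diagonal_mul_diagonal]
  push_cast
  rfl

lemma one_sub_conjStarAlgAut_diagonal (μ : ι → ℝ) :
    1 - conjStarAlgAut ℂ _ U (diagonal fun i => (μ i : ℂ)) =
      conjStarAlgAut ℂ _ U (diagonal fun i => ((1 - μ i : ℝ) : ℂ)) := by
  rw [← map_one (conjStarAlgAut ℂ _ U), ← map_sub, ← diagonal_one, diagonal_sub]
  push_cast
  rfl

lemma inv_conjStarAlgAut_diagonal {a : ι → ℝ} (ha : ∀ i, a i ≠ 0) :
    (conjStarAlgAut ℂ _ U (diagonal fun i => (a i : ℂ)))⁻¹ =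
      conjStarAlgAut ℂ _ U (diagonal fun i => ((a i)⁻¹ : ℝ)) := by
  refine inv_eq_right_inv ?_
  rw [conjStarAlgAut_diagonal_mul]
  simp [ha]

lemma mul_inv_one_sub_conjStarAlgAut_diagonal {μ : ι → ℝ} (hμ : ∀ i, μ i < 1) :
    conjStarAlgAut ℂ _ U (diagonal fun i => (μ i : ℂ)) *
        (1 - conjStarAlgAut ℂ _ U (diagonal fun i => (μ i : ℂ)))⁻¹ =
      conjStarAlgAut ℂ _ U (diagonal fun i => ((μ i / (1 - μ i) : ℝ) : ℂ)) := by
  rw [one_sub_conjStarAlgAut_diagonal,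
    inv_conjStarAlgAut_diagonal U fun i => (sub_pos.mpr (hμ i)).ne', conjStarAlgAut_diagonal_mul]
  rfl

lemma aeval_conjStarAlgAut_diagonal (e : ι → ℝ) (p : Polynomial ℝ) :
    Polynomial.aeval (conjStarAlgAut ℂ _ U (diagonal fun i => (e i : ℂ))) p =
      conjStarAlgAut ℂ _ U (diagonal fun i => ((p.eval (e i) : ℝ) : ℂ)) := by
  have h := Polynomial.aeval_algHom_apply
    (((conjStarAlgAut ℝ (Matrix ι ι ℂ) U) : Matrix ι ι ℂ →ₐ[ℝ] Matrix ι ι ℂ).comp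
      (diagonalAlgHom ℝ)) (fun i => (e i : ℂ)) p
  simpa [Polynomial.aeval_pi_apply, ← Complex.coe_algebraMap, Polynomial.aeval_algebraMap_apply]
    using h

lemma cfc_conjStarAlgAut_diagonal (e : ι → ℝ) (f : ℝ → ℝ) :
    cfc f (conjStarAlgAut ℂ _ U (diagonal fun i => (e i : ℂ))) =
      conjStarAlgAut ℂ _ U (diagonal fun i => (f (e i) : ℂ)) := by
  set A := conjStarAlgAut ℂ _ U (diagonal fun i => (e i : ℂ)) with hA_def
  have hA : IsSelfAdjoint A :=
    (isHermitian_diagonal_of_self_adjoint _ (by ext; simp)).isSelfAdjoint.map _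
  have hspec : spectrum ℝ A ⊆ Set.range e := by
    intro x hx
    rw [hA_def, conjStarAlgAut_apply, spectrum_star_right_conjugate,
      ← spectrum.algebraMap_mem_iff ℂ, spectrum_diagonal] at hx
    obtain ⟨i, hi⟩ := hx
    exact ⟨i, Complex.ofReal_injective hi⟩
  set p := Lagrange.interpolate (univ.image e) id f
  have hp : ∀ i, p.eval (e i) = f (e i) := fun i =>
    Lagrange.eval_interpolate_at_node f (Set.injOn_id _) (mem_image_of_mem e (mem_univ i))
  calc cfc f A = cfc (p.eval ·) A := cfc_congr fun x hx => by
        obtain ⟨i, rfl⟩ := hspec hx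
        exact (hp i).symm
    _ = Polynomial.aeval A p := cfc_polynomial p A
    _ = _ := by simp only [A, aeval_conjStarAlgAut_diagonal U, hp]

lemma mrpow_conjStarAlgAut_diagonal (e : ι → ℝ) (x : ℝ) :
    mrpow x (conjStarAlgAut ℂ _ U (diagonal fun i => (e i : ℂ))) =
      conjStarAlgAut ℂ _ U (diagonal fun i => ((e i ^ x : ℝ) : ℂ)) :=
  cfc_conjStarAlgAut_diagonal U e _

end Conjugation

section QuasiFreeDensity

variable {ι : Type*} [Fintype ι] [DecidableEq ι]

lemma exists_conjStarAlgAut_diagonal {X : Matrix ι ι ℂ} (hX : X.PosDef) (hX' : (1 - X).PosDef) :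
    ∃ (U : unitary (Matrix ι ι ℂ)) (μ : ι → ℝ), (∀ i, 0 < μ i) ∧ (∀ i, μ i < 1) ∧
      X = conjStarAlgAut ℂ _ U (diagonal fun i => (μ i : ℂ)) := by
  refine ⟨_, _, hX.eigenvalues_pos, fun i => ?_, hX.1.spectral_theorem⟩
  have hmem : 1 - hX.1.eigenvalues i ∈ spectrum ℝ (1 - X) := by
    rw [← map_one (algebraMap ℝ (Matrix ι ι ℂ)), ← spectrum.singleton_sub_eq]
    exact Set.sub_mem_sub rfl (hX.1.eigenvalues_mem_spectrum_real i)
  exact sub_pos.mp (hX'.isStrictlyPositive.spectrum_pos hmem)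

lemma qfDensity_conjStarAlgAut_diagonal (U : unitary (Matrix ι ι ℂ)) {μ : ι → ℝ}
    (hμ : ∀ i, μ i < 1) :
    qfDensity (conjStarAlgAut ℂ _ U (diagonal fun i => (μ i : ℂ))) =
      conjStarAlgAut ℂ _ (gammaUnitary U)
        (diagonal fun S => (((∏ i, (1 - μ i)) * ∏ i ∈ S, μ i / (1 - μ i) : ℝ) : ℂ)) := by
  rw [qfDensity, mul_inv_one_sub_conjStarAlgAut_diagonal U hμ, one_sub_conjStarAlgAut_diagonal,
    det_conjStarAlgAut, det_diagonal, gammaOp_conjStarAlgAut, gammaOp_diagonal, ← map_smul,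
    ← diagonal_smul]
  congr 2
  funext S
  push_cast
  rfl

theorem mrpow_qfDensity {X : Matrix ι ι ℂ} (hX : X.PosDef) (hX' : (1 - X).PosDef) (x : ℝ) :
    mrpow x (qfDensity X) = (mrpow x (1 - X)).det • gammaOp (mrpow x (X * (1 - X)⁻¹)) := by
  obtain ⟨U, μ, hμ0, hμ1, rfl⟩ := exists_conjStarAlgAut_diagonal hX hX'
  have h1μ : ∀ i, 0 ≤ 1 - μ i := fun i => (sub_pos.mpr (hμ1 i)).le
  have hodds : ∀ i, 0 ≤ μ i / (1 - μ i) := fun i => div_nonneg (hμ0 i).le (h1μ i)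
  rw [qfDensity_conjStarAlgAut_diagonal U hμ1, mrpow_conjStarAlgAut_diagonal,
    mul_inv_one_sub_conjStarAlgAut_diagonal U hμ1, one_sub_conjStarAlgAut_diagonal,
    mrpow_conjStarAlgAut_diagonal, mrpow_conjStarAlgAut_diagonal, det_conjStarAlgAut,
    det_diagonal, gammaOp_conjStarAlgAut, gammaOp_diagonal, ← map_smul, ← diagonal_smul]
  congr 2
  funext S
  simp only [Pi.smul_apply, smul_eq_mul, ← Complex.ofReal_prod, ← Complex.ofReal_mul]
  rw [Real.mul_rpow (prod_nonneg fun i _ => h1μ i) (prod_nonneg fun i _ => hodds i),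
    Real.finsetProd_rpow _ _ fun i _ => h1μ i, Real.finsetProd_rpow _ _ fun i _ => hodds i]

lemma rpow_one_sub_mul_rpow_div {m : ℝ} (hm0 : 0 < m) (hm1 : m < 1) (x : ℝ) :
    (1 - m) ^ x * (m / (1 - m)) ^ x = m ^ x := by
  rw [Real.div_rpow hm0.le (sub_pos.mpr hm1).le,
    mul_div_cancel₀ _ (Real.rpow_pos_of_pos (sub_pos.mpr hm1) x).ne']

theorem mrpow_one_sub_mul_mrpow_mul_inv {X : Matrix ι ι ℂ} (hX : X.PosDef)
    (hX' : (1 - X).PosDef) (x : ℝ) :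
    mrpow x (1 - X) * mrpow x (X * (1 - X)⁻¹) = mrpow x X := by
  obtain ⟨U, μ, hμ0, hμ1, rfl⟩ := exists_conjStarAlgAut_diagonal hX hX'
  rw [mul_inv_one_sub_conjStarAlgAut_diagonal U hμ1, one_sub_conjStarAlgAut_diagonal,
    mrpow_conjStarAlgAut_diagonal, mrpow_conjStarAlgAut_diagonal, mrpow_conjStarAlgAut_diagonal,
    conjStarAlgAut_diagonal_mul]
  simp only [rpow_one_sub_mul_rpow_div (hμ0 _) (hμ1 _)]

theorem mrpow_mul_inv_mul_mrpow_one_sub {X : Matrix ι ι ℂ} (hX : X.PosDef)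
    (hX' : (1 - X).PosDef) (x : ℝ) :
    mrpow x (X * (1 - X)⁻¹) * mrpow x (1 - X) = mrpow x X := by
  obtain ⟨U, μ, hμ0, hμ1, rfl⟩ := exists_conjStarAlgAut_diagonal hX hX'
  rw [mul_inv_one_sub_conjStarAlgAut_diagonal U hμ1, one_sub_conjStarAlgAut_diagonal,
    mrpow_conjStarAlgAut_diagonal, mrpow_conjStarAlgAut_diagonal, mrpow_conjStarAlgAut_diagonal,
    conjStarAlgAut_diagonal_mul]
  simp only [mul_comm ((μ _ / (1 - μ _)) ^ x), rpow_one_sub_mul_rpow_div (hμ0 _) (hμ1 _)]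

end QuasiFreeDensity

theorem trace_qf_petz_general {d : ℕ} (Q R : Matrix (Fin d) (Fin d) ℂ)
    (hQ : Q.PosDef) (hQ' : (1 - Q).PosDef) (hR : R.PosDef) (hR' : (1 - R).PosDef)
    (α : ℝ) :
    (mrpow α (qfDensity Q) * mrpow (1 - α) (qfDensity R)).trace
      = (mrpow α Q * mrpow (1 - α) R + mrpow α (1 - Q) * mrpow (1 - α) (1 - R)).det := by
  set A := mrpow α (Q * (1 - Q)⁻¹)
  set B := mrpow (1 - α) (R * (1 - R)⁻¹)
  calc (mrpow α (qfDensity Q) * mrpow (1 - α) (qfDensity R)).trace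
      = (mrpow α (1 - Q)).det * (mrpow (1 - α) (1 - R)).det * (1 + A * B).det := by
        rw [mrpow_qfDensity hQ hQ', mrpow_qfDensity hR hR', smul_mul_smul_comm, trace_smul,
          ← gammaOp_mul, trace_gammaOp, smul_eq_mul]
    _ = (mrpow α (1 - Q) * (1 + A * B) * mrpow (1 - α) (1 - R)).det := by
        rw [det_mul, det_mul]
        ring
    _ = _ := by
        rw [mul_add, mul_one, add_mul, ← mul_assoc, mul_assoc _ B,
          mrpow_one_sub_mul_mrpow_mul_inv hQ hQ', mrpow_mul_inv_mul_mrpow_one_sub hR hR', add_comm]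

/-- Petz-type Rényi quantity of two quasi-free density operators:
`Tr(ω̂_Q^α ω̂_R^{1-α}) = det[Q^α R^{1-α} + (I-Q)^α (I-R)^{1-α}]`. -/
theorem trace_qf_petz {d : ℕ} (Q R : Matrix (Fin d) (Fin d) ℂ)
    (hQ : Q.PosDef) (hQ' : (1 - Q).PosDef) (hR : R.PosDef) (hR' : (1 - R).PosDef)
    (α : ℝ) (hα : 0 < α) :
    (mrpow α (qfDensity Q) * mrpow (1 - α) (qfDensity R)).trace
      = (mrpow α Q * mrpow (1 - α) R + mrpow α (1 - Q) * mrpow (1 - α) (1 - R)).det :=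
  trace_qf_petz_general Q R hQ hQ' hR hR' α
end

section
/- Let A, B be positive definite operators on a finite-dimensional Hilbert space and α ∈ ℝ. Then B^{1/2}(B^{-1/2} A B^{-1/2})^α B^{1/2} = A^{1/2}(A^{-1/2} B A^{-1/2})^{1-α} A^{1/2}. -/
open scoped ComplexOrder

/-!
Put `U = B^{-1/2} A^{1/2}`, so that `B^{-1/2} A B^{-1/2} = U Uᴴ` and
`A^{1/2} B^{-1} A^{1/2} = Uᴴ U`. Since `U (Uᴴ U) = (U Uᴴ) U`, the similarity `U` carries every
function of `Uᴴ U` to the same function of `U Uᴴ`, whence `(U Uᴴ)^α = U (Uᴴ U)^{α-1} Uᴴ` and the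
left side equals `A^{1/2} (A^{1/2} B^{-1} A^{1/2})^{α-1} A^{1/2}`. As `A^{1/2} B^{-1} A^{1/2}` is
the inverse of `A^{-1/2} B A^{-1/2}`, its `(α-1)`-th power is the `(1-α)`-th power of the latter.
-/

open scoped MatrixOrder
open Polynomial

theorem SemiconjBy.aeval {R A : Type*} [CommSemiring R] [Semiring A] [Algebra R A] {s a b : A}
    (h : SemiconjBy s a b) (p : R[X]) : SemiconjBy s (aeval a p) (aeval b p) := by
  induction p using Polynomial.induction_on' with
  | add p q hp hq => simpa only [map_add] using hp.add_right hq
  | monomial k c =>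
    simp only [aeval_monomial]
    exact SemiconjBy.mul_right (Algebra.commute_algebraMap_right c s) (h.pow_right k)

theorem SemiconjBy.cfc_of_finite {R A : Type*} {p : A → Prop} [Field R] [StarRing R]
    [MetricSpace R] [IsTopologicalRing R] [ContinuousStar R] [Ring A] [StarRing A]
    [TopologicalSpace A] [Algebra R A] [ContinuousFunctionalCalculus R A p] {s a b : A}
    (h : SemiconjBy s a b) (f : R → R) (ha : (spectrum R a).Finite)
    (hb : (spectrum R b).Finite) (hpa : p a := by cfc_tac) (hpb : p b := by cfc_tac) :
    SemiconjBy s (cfc f a) (cfc f b) := by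
  classical
  -- on both spectra, `f` agrees with its Lagrange interpolation polynomial
  set q := Lagrange.interpolate (ha.union hb).toFinset id f
  have hq : ∀ x ∈ spectrum R a ∪ spectrum R b, q.eval x = f x := fun x hx =>
    Lagrange.eval_interpolate_at_node f Function.injective_id.injOn
      ((ha.union hb).mem_toFinset.mpr hx)
  have hcfc : ∀ c, p c → spectrum R c ⊆ spectrum R a ∪ spectrum R b →
      cfc f c = Polynomial.aeval c q := fun c hc hsub => by
    rw [← cfc_polynomial q c]
    exact cfc_congr fun x hx => (hq x (hsub hx)).symm
  rw [hcfc a hpa Set.subset_union_left, hcfc b hpb Set.subset_union_right]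
  exact h.aeval q

namespace CFC

variable {A : Type*} [PartialOrder A] [Ring A] [StarRing A] [TopologicalSpace A]
  [StarOrderedRing A] [Algebra ℝ A] [ContinuousFunctionalCalculus ℝ A IsSelfAdjoint]
  [NonnegSpectrumClass ℝ A] [IsSemitopologicalRing A] [T2Space A]

theorem rpow_half_mul_rpow_half (a : A) (ha : 0 ≤ a := by cfc_tac) :
    a ^ (1 / 2 : ℝ) * a ^ (1 / 2 : ℝ) = a := by
  rw [← sqrt_eq_rpow, sqrt_mul_sqrt_self a ha]

theorem rpow_eq_rpow_neg_of_mul_eq_one {c d : A} (hc : IsStrictlyPositive c) (hcd : c * d = 1)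
    (x : ℝ) : d ^ x = c ^ (-x) := by
  have hd : d = c ^ (-1 : ℝ) := hc.isUnit.mul_left_cancel <| by
    rw [hcd, ← rpow_mul_rpow_neg 1 hc, rpow_one c hc.nonneg]
  rw [hd, rpow_rpow c _ _ (by norm_num) hc, neg_one_mul]

end CFC

namespace Matrix

open CFC

variable {n 𝕜 : Type*} [Fintype n] [DecidableEq n] [RCLike 𝕜]

theorem mrpow_eq_rpow {A : Matrix n n ℂ} (hA : A.PosSemidef) (x : ℝ) : mrpow x A = A ^ x :=
  (rpow_eq_cfc_real hA.nonneg).symm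

theorem PosDef.rpow_mul_mul_rpow {A B : Matrix n n 𝕜} (hA : A.PosDef) (hB : B.PosDef) (x : ℝ) :
    (B ^ x * A * B ^ x).PosDef := by
  have hBx := hB.isStrictlyPositive.rpow B x
  simpa only [star_eq_conjTranspose, hBx.isSelfAdjoint.star_eq] using
    (IsUnit.posDef_star_right_conjugate_iff hBx.isUnit).mpr hA

theorem rpow_mul_conjTranspose_self {U : Matrix n n 𝕜} (hU : IsUnit U) (α : ℝ) :
    (U * Uᴴ) ^ α = U * (Uᴴ * U) ^ (α - 1) * Uᴴ := by
  have hUUH : IsStrictlyPositive (U * Uᴴ) := by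
    simpa only [mul_one, star_eq_conjTranspose] using
      hU.isStrictlyPositive_star_right_conjugate_iff.mpr isStrictlyPositive_one
  have hUHU : IsStrictlyPositive (Uᴴ * U) := by
    simpa only [mul_one, star_eq_conjTranspose] using
      hU.isStrictlyPositive_star_left_conjugate_iff.mpr isStrictlyPositive_one
  have hsemi : SemiconjBy U (Uᴴ * U) (U * Uᴴ) := (mul_assoc _ _ _).symm
  have hpow : U * (Uᴴ * U) ^ α = (U * Uᴴ) ^ α * U := by
    rw [rpow_eq_cfc_real hUUH.nonneg, rpow_eq_cfc_real hUHU.nonneg]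
    exact hsemi.cfc_of_finite _ finite_real_spectrum finite_real_spectrum
  rw [← hU.mul_left_inj, ← hpow]
  calc U * (Uᴴ * U) ^ α = U * ((Uᴴ * U) ^ (α - 1) * (Uᴴ * U) ^ (1 : ℝ)) := by
        rw [← rpow_add hUHU.isUnit, sub_add_cancel]
    _ = U * (Uᴴ * U) ^ (α - 1) * Uᴴ * U := by
        rw [rpow_one _ hUHU.nonneg]
        simp only [mul_assoc]

theorem PosDef.rpow_half_mul_conj_rpow_mul_rpow_half {A B : Matrix n n 𝕜} (hA : A.PosDef)
    (hB : B.PosDef) (α : ℝ) :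
    B ^ (1 / 2 : ℝ) * (B ^ (-(1 / 2) : ℝ) * A * B ^ (-(1 / 2) : ℝ)) ^ α * B ^ (1 / 2 : ℝ) =
      A ^ (1 / 2 : ℝ) * (A ^ (1 / 2 : ℝ) * B ^ (-1 : ℝ) * A ^ (1 / 2 : ℝ)) ^ (α - 1) *
        A ^ (1 / 2 : ℝ) := by
  have hA' := hA.isStrictlyPositive
  have hB' := hB.isStrictlyPositive
  set a := A ^ (1 / 2 : ℝ)
  set b := B ^ (1 / 2 : ℝ)
  set b' := B ^ (-(1 / 2) : ℝ)
  have ha : aᴴ = a := (hA'.rpow A _).isSelfAdjoint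
  have hb' : b'ᴴ = b' := (hB'.rpow B _).isSelfAdjoint
  have hU : IsUnit (b' * a) := (hB'.rpow B _).isUnit.mul (hA'.rpow A _).isUnit
  have hUUH : b' * a * (b' * a)ᴴ = b' * A * b' := by
    rw [conjTranspose_mul, ha, hb', mul_assoc, ← mul_assoc a, rpow_half_mul_rpow_half A,
      mul_assoc]
  have hUHU : (b' * a)ᴴ * (b' * a) = a * B ^ (-1 : ℝ) * a := by
    rw [conjTranspose_mul, ha, hb', mul_assoc, ← mul_assoc b', ← rpow_add hB'.isUnit]
    norm_num [mul_assoc]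
  have hbb' : b * b' = 1 := rpow_mul_rpow_neg _ hB'
  have hb'b : b' * b = 1 := rpow_neg_mul_rpow _ hB'
  rw [← hUUH, rpow_mul_conjTranspose_self hU, hUHU, conjTranspose_mul, ha, hb']
  simp only [← mul_assoc, hbb', one_mul]
  simp only [mul_assoc, hb'b, mul_one]

end Matrix

/-- `B^{1/2}(B^{-1/2} A B^{-1/2})^α B^{1/2} = A^{1/2}(A^{-1/2} B A^{-1/2})^{1-α} A^{1/2}`
for positive definite matrices `A, B`. -/
theorem geometric_renyi_symm {n : Type*} [Fintype n] [DecidableEq n]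
    (A B : Matrix n n ℂ) (hA : A.PosDef) (hB : B.PosDef) (α : ℝ) :
    mrpow (1 / 2) B * mrpow α (mrpow (-(1 / 2)) B * A * mrpow (-(1 / 2)) B) * mrpow (1 / 2) B
      = mrpow (1 / 2) A * mrpow (1 - α) (mrpow (-(1 / 2)) A * B * mrpow (-(1 / 2)) A) *
          mrpow (1 / 2) A := by
  open Matrix CFC in
  have hA' := hA.isStrictlyPositive
  have hB' := hB.isStrictlyPositive
  have hC := hA.rpow_mul_mul_rpow hB (-(1 / 2))
  have hD := hB.rpow_mul_mul_rpow hA (-(1 / 2))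
  have hE := (hB'.rpow B (-1)).posDef.rpow_mul_mul_rpow hA (1 / 2)
  have hED : A ^ (1 / 2 : ℝ) * B ^ (-1 : ℝ) * A ^ (1 / 2 : ℝ) *
      (A ^ (-(1 / 2) : ℝ) * B * A ^ (-(1 / 2) : ℝ)) = 1 := by
    have hBB : B ^ (-1 : ℝ) * B = 1 := by rw [← rpow_neg_mul_rpow 1 hB', rpow_one B]
    calc _ = A ^ (1 / 2 : ℝ) * B ^ (-1 : ℝ) * (A ^ (1 / 2 : ℝ) * A ^ (-(1 / 2) : ℝ)) * B *
          A ^ (-(1 / 2) : ℝ) := by simp only [mul_assoc]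
      _ = A ^ (1 / 2 : ℝ) * (B ^ (-1 : ℝ) * B) * A ^ (-(1 / 2) : ℝ) := by
          rw [rpow_mul_rpow_neg _ hA', mul_one, mul_assoc (A ^ _)]
      _ = 1 := by rw [hBB, mul_one, rpow_mul_rpow_neg _ hA']
  simp only [mrpow_eq_rpow hA.posSemidef, mrpow_eq_rpow hB.posSemidef]
  rw [mrpow_eq_rpow hC.posSemidef, mrpow_eq_rpow hD.posSemidef,
    hA.rpow_half_mul_conj_rpow_mul_rpow_half hB,
    rpow_eq_rpow_neg_of_mul_eq_one hE.isStrictlyPositive hED, neg_sub]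
end

section
/- Let ω, σ be positive semidefinite operators on a finite-dimensional Hilbert space with supp(ω) ≤ supp(σ), and let r be the number of distinct nonzero eigenvalues of σ. Then ω ≤ r·P_σ(ω), where P_σ(ω) := ∑_{λ ∈ spec(σ)} P_λ ω P_λ is the pinching of ω by the spectral projections P_λ of σ. -/
/-!
Let `P λ` be the spectral projections of `σ` and `S` its nonzero eigenvalues. Since `σ P₀ = 0`,
the support condition gives `ω P₀ = 0`; hence the `λ = 0` term of the pinching vanishes and
`ω = Qᴴ ω Q` for `Q = ∑_{λ ∈ S} P λ = 1 - P₀`. The claim is then the operator Cauchy–Schwarz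
inequality `Qᴴ ω Q ≤ #S • ∑_{λ ∈ S} P λ ω P λ`, which follows from the identity
`#s • ∑ᵢ Qᵢᴴ ω Qᵢ - (∑ Qᵢ)ᴴ ω (∑ Qᵢ) = 2⁻¹ • ∑ᵢ ∑ⱼ (Qᵢ - Qⱼ)ᴴ ω (Qᵢ - Qⱼ)`.
-/

open scoped ComplexOrder
open Matrix

section SpectralProjections

variable {R A : Type*} {p : A → Prop} [CommSemiring R] [StarRing R] [MetricSpace R]
  [IsTopologicalSemiring R] [ContinuousStar R] [TopologicalSpace A] [Ring A] [StarRing A]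
  [Algebra R A] [ContinuousFunctionalCalculus R A p] [DecidableEq R] {a : A}

theorem sum_cfc_ite_eq_one (ha : p a) (hfin : (spectrum R a).Finite) :
    ∑ μ ∈ hfin.toFinset, cfc (fun t => if t = μ then (1 : R) else 0) a = 1 := by
  rw [← cfc_sum _ a _ fun μ _ => hfin.continuousOn _, ← cfc_one R a]
  refine cfc_congr fun t ht => ?_
  simp [hfin.mem_toFinset.mpr ht]

theorem mul_cfc_ite_zero_eq_zero (ha : p a) (hfin : (spectrum R a).Finite) :
    a * cfc (fun t => if t = 0 then (1 : R) else 0) a = 0 := by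
  nth_rw 1 [← cfc_id R a]
  rw [← cfc_mul _ _ a (hfin.continuousOn _) (hfin.continuousOn _), ← cfc_zero R a]
  refine cfc_congr fun t _ => ?_
  by_cases h : t = 0 <;> simp [h]

end SpectralProjections

namespace Matrix

variable {m n 𝕜 : Type*} [Fintype n] [RCLike 𝕜]

theorem mul_eq_zero_of_ker_le [Fintype m] [DecidableEq n] {α : Type*} [Semiring α]
    {σ ω : Matrix m m α} {B : Matrix m n α} (hsupp : ∀ v, σ *ᵥ v = 0 → ω *ᵥ v = 0)
    (hB : σ * B = 0) : ω * B = 0 := by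
  refine ext_of_mulVec_single fun i => ?_
  rw [← mulVec_mulVec, hsupp _ (by rw [mulVec_mulVec, hB, zero_mulVec]), zero_mulVec]

theorem conjTranspose_mul_mul_eq_self_of_mul_eq {ω B : Matrix n n 𝕜} (hω : ω.IsHermitian)
    (hB : ω * B = ω) : Bᴴ * ω * B = ω := by
  have hB' : Bᴴ * ω = ω := by
    simpa [conjTranspose_mul, hω.eq] using congrArg conjTranspose hB
  rw [hB', hB]

theorem card_smul_sum_sub_eq {ι : Type*} (ω : Matrix n n 𝕜) (s : Finset ι)
    (Q : ι → Matrix n m 𝕜) :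
    (s.card : 𝕜) • ∑ i ∈ s, (Q i)ᴴ * ω * Q i - (∑ i ∈ s, Q i)ᴴ * ω * ∑ i ∈ s, Q i
      = (2⁻¹ : 𝕜) • ∑ i ∈ s, ∑ j ∈ s, (Q i - Q j)ᴴ * ω * (Q i - Q j) := by
  have hdiag : ∑ i ∈ s, ∑ _j ∈ s, (Q i)ᴴ * ω * Q i
      = (s.card : 𝕜) • ∑ i ∈ s, (Q i)ᴴ * ω * Q i := by
    simp only [Finset.sum_const, Finset.smul_sum, Nat.cast_smul_eq_nsmul]
  have hcross : ∑ i ∈ s, ∑ j ∈ s, (Q i)ᴴ * ω * Q j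
      = (∑ i ∈ s, Q i)ᴴ * ω * ∑ i ∈ s, Q i := by
    simp only [conjTranspose_sum, Matrix.sum_mul, Matrix.mul_sum]
    exact Finset.sum_comm
  have hexpand : ∑ i ∈ s, ∑ j ∈ s, (Q i - Q j)ᴴ * ω * (Q i - Q j)
      = (2 : 𝕜) • ((s.card : 𝕜) • ∑ i ∈ s, (Q i)ᴴ * ω * Q i
          - (∑ i ∈ s, Q i)ᴴ * ω * ∑ i ∈ s, Q i) := by
    simp only [conjTranspose_sub, Matrix.sub_mul, Matrix.mul_sub, Finset.sum_sub_distrib]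
    rw [Finset.sum_comm (f := fun i j => (Q j)ᴴ * ω * Q j),
      Finset.sum_comm (f := fun i j => (Q j)ᴴ * ω * Q i), hdiag, hcross]
    module
  rw [hexpand, smul_smul, inv_mul_cancel₀ two_ne_zero, one_smul]

theorem PosSemidef.card_smul_sum_sub [Fintype m] {ι : Type*} {ω : Matrix n n 𝕜}
    (hω : ω.PosSemidef) (s : Finset ι) (Q : ι → Matrix n m 𝕜) :
    ((s.card : 𝕜) • ∑ i ∈ s, (Q i)ᴴ * ω * Q i
      - (∑ i ∈ s, Q i)ᴴ * ω * ∑ i ∈ s, Q i).PosSemidef := by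
  rw [card_smul_sum_sub_eq]
  exact (posSemidef_sum _ fun i _ => posSemidef_sum _ fun j _ =>
    hω.conjTranspose_mul_mul_same _).smul (by positivity)

end Matrix

/-- Improved pinching inequality: if `supp ω ≤ supp σ` and `r` is the number of distinct
nonzero eigenvalues of `σ`, then `ω ≤ r · P_σ(ω)`, where
`P_σ(ω) = ∑_{λ ∈ spec σ} P_λ ω P_λ` is the pinching of `ω` by the spectral projections of `σ`. -/
theorem pinching_improved {n : Type*} [Fintype n] [DecidableEq n]
    (ω σ : Matrix n n ℂ) (hω : ω.PosSemidef) (hσ : σ.PosSemidef)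
    (hsupp : ∀ v, σ.mulVec v = 0 → ω.mulVec v = 0) :
    ((((spectrum ℝ σ \ {0}).ncard : ℂ) •
        ∑ lam ∈ (Matrix.finite_real_spectrum (A := σ)).toFinset,
          hσ.1.cfc (fun t => if t = lam then 1 else 0) * ω *
            hσ.1.cfc (fun t => if t = lam then 1 else 0)) - ω).PosSemidef := by
  have hfin := finite_real_spectrum (A := σ)
  set P : ℝ → Matrix n n ℂ := fun μ => cfc (fun t => if t = μ then (1 : ℝ) else 0) σ
  set S := hfin.toFinset.erase 0
  have hcfc (μ : ℝ) : hσ.1.cfc (fun t => if t = μ then 1 else 0) = P μ :=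
    (hσ.1.cfc_eq _).symm
  simp only [hcfc]
  have hPH (μ : ℝ) : (P μ)ᴴ = P μ := (cfc_predicate _ σ : IsSelfAdjoint (P μ))
  have hP₁ : ∑ μ ∈ hfin.toFinset, P μ = 1 := sum_cfc_ite_eq_one hσ.1 hfin
  have hωP₀ : ω * P 0 = 0 :=
    mul_eq_zero_of_ker_le hsupp (mul_cfc_ite_zero_eq_zero hσ.1 hfin)
  have hcard : (spectrum ℝ σ \ {0}).ncard = S.card := by
    rw [← hfin.coe_toFinset, ← Finset.coe_erase, Set.ncard_coe_finset]
  have hpinch : ∑ μ ∈ hfin.toFinset, P μ * ω * P μ = ∑ μ ∈ S, (P μ)ᴴ * ω * P μ := by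
    rw [Finset.sum_erase _ (by rw [hPH, mul_assoc, hωP₀, mul_zero])]
    simp only [hPH]
  have hω_eq : (∑ μ ∈ S, P μ)ᴴ * ω * ∑ μ ∈ S, P μ = ω := by
    refine conjTranspose_mul_mul_eq_self_of_mul_eq hω.1 ?_
    rw [Finset.mul_sum, Finset.sum_erase (f := (ω * P ·)) _ hωP₀, ← Finset.mul_sum, hP₁,
      mul_one]
  rw [hpinch, hcard]
  nth_rw 2 [← hω_eq]
  exact hω.card_smul_sum_sub S P
end

section
/- Let g ∈ L^∞ on the torus 𝕋 with values in d×d complex matrices, let G be the corresponding block Toeplitz operator on ℓ²(ℤ)⊗ℂ^d (i.e. G = F^{-1} M_g F with F the component-wise Fourier transform), and let G_n = P_n G P_n with P_n the projection onto sites {0,…,n−1}. Then for each k ∈ {0,…,n−1}, the (k,k)-th d×d diagonal block of F_n G_n F_n* (where F_n is the discrete Fourier transform on ℓ²({0,…,n−1}) tensored with I_d) equals (1/2π)∫_{−π}^{π} Φ_n(y)·g(2πk/n − y) dy, where Φ_n is the Fejér kernel. -/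
open Real MeasureTheory

/-- The `m`-th (matrix) Fourier coefficient of a `2π`-periodic matrix-valued symbol `g`:
this is the entry of the block Toeplitz operator `G = F⁻¹ M_g F` at block-distance `m`. -/
noncomputable def toeplitzCoeff {d : ℕ} (g : ℝ → Matrix (Fin d) (Fin d) ℂ) (m : ℤ)
    (a b : Fin d) : ℂ :=
  (1 / (2 * π) : ℂ) * ∫ x in (-π)..π, g x a b * Complex.exp (-Complex.I * m * x)


/-!
With `c = 2πk/n` and `D(θ) = ∑_{j<n} e^{ijθ}`, the double sum is the bilinear form of the
Toeplitz matrix against the vectors `(e^{icj})_j` and `(e^{-icj})_j`, hence equals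
`(1/2π)∫ g(x) D(c - x) D(x - c) dx`. Since `D(-θ) = conj D(θ)`, the geometric sum gives
`D(θ) D(-θ) = sin²(nθ/2)/sin²(θ/2) = n Φ_n(θ)` for `|θ| < 2π`, and as both `g` and `D` are
`2π`-periodic the substitution `y = c - x` does not move the interval `[-π, π]`.
-/

open Complex in
theorem sum_sum_mul_toeplitzCoeff_mul {d : ℕ} {ι : Type*} [Fintype ι]
    (g : ℝ → Matrix (Fin d) (Fin d) ℂ) (a b : Fin d)
    (hg : IntervalIntegrable (fun x => g x a b) volume (-π) π) (m : ι → ℤ) (u w : ι → ℂ) :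
    ∑ i, ∑ i', u i * toeplitzCoeff g (m i - m i') a b * w i'
      = (1 / (2 * π) : ℂ) * ∫ x in (-π)..π, g x a b *
          ((∑ i, u i * exp (-I * m i * x)) * ∑ i', w i' * exp (I * m i' * x)) := by
  have hterm : ∀ i i', u i * toeplitzCoeff g (m i - m i') a b * w i'
      = (1 / (2 * π) : ℂ) * ∫ x in (-π)..π,
          g x a b * (u i * exp (-I * m i * x) * (w i' * exp (I * m i' * x))) := by
    intro i i'
    have hx : ∀ x : ℝ, g x a b * (u i * exp (-I * m i * x) * (w i' * exp (I * m i' * x)))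
        = u i * w i' * (g x a b * exp (-I * ↑(m i - m i') * x)) := by
      intro x
      rw [show -I * ↑(m i - m i') * x = -I * m i * x + I * m i' * x by push_cast; ring,
        Complex.exp_add]
      ring
    simp_rw [hx, intervalIntegral.integral_const_mul, toeplitzCoeff]
    ring
  have hint : ∀ i i', IntervalIntegrable
      (fun x : ℝ => g x a b * (u i * exp (-I * m i * x) * (w i' * exp (I * m i' * x))))
      volume (-π) π :=
    fun i i' => hg.mul_continuousOn (by fun_prop)
  have hrow : ∀ i, IntervalIntegrable (fun x : ℝ => ∑ i',
      g x a b * (u i * exp (-I * m i * x) * (w i' * exp (I * m i' * x)))) volume (-π) π :=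
    fun i => by
      simpa only [Finset.sum_fn] using IntervalIntegrable.sum Finset.univ fun i' _ => hint i i'
  simp_rw [hterm, Finset.sum_mul_sum, Finset.mul_sum]
  rw [intervalIntegral.integral_finsetSum fun i _ => hrow i, Finset.mul_sum]
  refine Finset.sum_congr rfl fun i _ => ?_
  rw [intervalIntegral.integral_finsetSum fun i' _ => hint i i', Finset.mul_sum]

theorem Function.Periodic.intervalIntegral_comp_sub_left {E : Type*} [NormedAddCommGroup E]
    [NormedSpace ℝ E] {f : ℝ → E} {T : ℝ} (hf : Function.Periodic f T) (t c : ℝ) :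
    ∫ x in t..t + T, f (c - x) = ∫ x in t..t + T, f x := by
  rw [intervalIntegral.integral_comp_sub_left, show c - t = c - (t + T) + T by ring,
    hf.intervalIntegral_add_eq]

noncomputable def expSum (n : ℕ) (θ : ℝ) : ℂ :=
  ∑ j ∈ Finset.range n, Complex.exp (Complex.I * θ) ^ j

theorem expSum_periodic (n : ℕ) : Function.Periodic (expSum n) (2 * π) := by
  intro θ
  simp only [expSum]
  rw [Complex.ofReal_add, mul_add, Complex.exp_add, Complex.ofReal_mul, Complex.ofReal_ofNat,
    show Complex.I * (2 * π) = 2 * π * Complex.I by ring, Complex.exp_two_pi_mul_I, mul_one]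

theorem expSum_neg (n : ℕ) (θ : ℝ) : expSum n (-θ) = (starRingEnd ℂ) (expSum n θ) := by
  simp [expSum, map_sum, ← Complex.exp_conj]

theorem norm_expSum {θ : ℝ} (hθ : Real.sin (θ / 2) ≠ 0) (n : ℕ) :
    ‖expSum n θ‖ = |Real.sin (n * θ / 2)| / |Real.sin (θ / 2)| := by
  have hne : Complex.exp (Complex.I * θ) - 1 ≠ 0 := by
    rw [← norm_ne_zero_iff, Complex.norm_exp_I_mul_ofReal_sub_one]
    simpa using hθ
  have hpow : Complex.exp (Complex.I * θ) ^ n = Complex.exp (Complex.I * ↑(n * θ)) := by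
    rw [← Complex.exp_nat_mul]
    push_cast
    ring_nf
  rw [expSum, geom_sum_eq (sub_ne_zero.1 hne), hpow, norm_div,
    Complex.norm_exp_I_mul_ofReal_sub_one, Complex.norm_exp_I_mul_ofReal_sub_one]
  simp only [Real.norm_eq_abs, abs_mul, abs_two]
  field_simp

theorem expSum_mul_expSum_neg {θ : ℝ} (hθ : |θ| < 2 * π) (n : ℕ) :
    expSum n θ * expSum n (-θ) = n * fejerKernel n θ := by
  rcases eq_or_ne θ 0 with rfl | hθ0
  · simp [expSum, fejerKernel]
  have hsin : Real.sin (θ / 2) ≠ 0 := by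
    rw [abs_lt] at hθ
    intro h
    rw [Real.sin_eq_zero_iff_of_lt_of_lt (by linarith) (by linarith)] at h
    exact hθ0 (by linarith)
  rcases Nat.eq_zero_or_pos n with rfl | hn
  · simp [expSum]
  have hreal : (|Real.sin (n * θ / 2)| / |Real.sin (θ / 2)|) ^ 2
      = n * ((1 / n) * Real.sin (n * θ / 2) ^ 2 / Real.sin (θ / 2) ^ 2) := by
    rw [div_pow, sq_abs, sq_abs]
    field_simp
  rw [expSum_neg, Complex.mul_conj', norm_expSum hsin, fejerKernel, if_neg hθ0,
    ← Complex.ofReal_pow, hreal]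
  push_cast
  ring

theorem intervalIntegral_mul_expSum_mul_expSum_neg (f : ℝ → ℂ) (n : ℕ) :
    ∫ y in (-π)..π, f y * (expSum n y * expSum n (-y))
      = n * ∫ y in (-π)..π, (fejerKernel n y : ℂ) * f y := by
  rw [← intervalIntegral.integral_const_mul]
  refine intervalIntegral.integral_congr fun y hy => ?_
  rw [Set.uIcc_of_le (by linarith [pi_pos])] at hy
  have hy' : |y| < 2 * π := abs_lt.2 ⟨by linarith [hy.1, pi_pos], by linarith [hy.2, pi_pos]⟩
  rw [expSum_mul_expSum_neg hy']
  ring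

theorem diagonal_block_dft_toeplitz_general {d : ℕ} (g : ℝ → Matrix (Fin d) (Fin d) ℂ)
    (hmeas : ∀ a b, Measurable fun x => g x a b)
    (hbdd : ∃ C, ∀ x a b, ‖g x a b‖ ≤ C)
    (hper : ∀ x, g (x + 2 * π) = g x)
    (n : ℕ) (k : Fin n) (a b : Fin d) :
    (1 / n : ℂ) * ∑ j : Fin n, ∑ j' : Fin n,
        Complex.exp (Complex.I * (2 * π * k * j / n)) *
          toeplitzCoeff g ((j : ℤ) - (j' : ℤ)) a b *
          Complex.exp (-Complex.I * (2 * π * k * j' / n))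
      = (1 / (2 * π) : ℂ) *
          ∫ y in (-π)..π, (fejerKernel n y : ℂ) * g (2 * π * k / n - y) a b := by
  obtain ⟨C, hC⟩ := hbdd
  have hg : IntervalIntegrable (fun x => g x a b) volume (-π) π :=
    (intervalIntegrable_const (c := C)).mono_fun' (hmeas a b).aestronglyMeasurable
      (ae_of_all _ fun x => hC x a b)
  set c : ℝ := 2 * π * k / n
  have hkernel : ∀ x : ℝ,
      (∑ j : Fin n, Complex.exp (Complex.I * (2 * π * k * j / n)) *
          Complex.exp (-Complex.I * (j : ℤ) * x)) *
        ∑ j' : Fin n, Complex.exp (-Complex.I * (2 * π * k * j' / n)) *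
          Complex.exp (Complex.I * (j' : ℤ) * x)
      = expSum n (c - x) * expSum n (-(c - x)) := by
    intro x
    simp only [c, expSum, ← Fin.sum_univ_eq_sum_range]
    congr 1 <;> refine Finset.sum_congr rfl fun j _ => ?_ <;>
      rw [← Complex.exp_add, ← Complex.exp_nat_mul] <;> congr 1 <;> push_cast <;> ring
  have hperiodic : Function.Periodic
      (fun y => g (c - y) a b * (expSum n y * expSum n (-y))) (2 * π) := fun y => by
    dsimp only
    rw [← hper (c - (y + 2 * π)), show c - (y + 2 * π) + 2 * π = c - y by ring,
      expSum_periodic n y, neg_add', (expSum_periodic n).sub_eq]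
  have hshift := hperiodic.intervalIntegral_comp_sub_left (-π) c
  simp only [sub_sub_cancel, show -π + 2 * π = π by ring] at hshift
  have hn : (n : ℂ) ≠ 0 := Nat.cast_ne_zero.2 k.pos.ne'
  rw [sum_sum_mul_toeplitzCoeff_mul g a b hg (fun j : Fin n => (j : ℤ))]
  simp only [hkernel]
  rw [hshift, intervalIntegral_mul_expSum_mul_expSum_neg]
  field_simp

/-- The `(k,k)`-th `d×d` diagonal block of `F_n G_n F_n*`, where `G_n = P_n G P_n` is the
truncation of the block Toeplitz operator with symbol `g` and `F_n` is the discrete Fourier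
transform (tensored with the identity), equals `(1/2π)∫_{−π}^{π} Φ_n(y)·g(2πk/n − y) dy`. -/
theorem diagonal_block_dft_toeplitz {d : ℕ} (g : ℝ → Matrix (Fin d) (Fin d) ℂ)
    (hmeas : ∀ a b, Measurable fun x => g x a b)
    (hbdd : ∃ C, ∀ x a b, ‖g x a b‖ ≤ C)
    (hper : ∀ x, g (x + 2 * π) = g x)
    (n : ℕ) (hn : 0 < n) (k : Fin n) (a b : Fin d) :
    (1 / n : ℂ) * ∑ j : Fin n, ∑ j' : Fin n,
        Complex.exp (Complex.I * (2 * π * k * j / n)) *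
          toeplitzCoeff g ((j : ℤ) - (j' : ℤ)) a b *
          Complex.exp (-Complex.I * (2 * π * k * j' / n))
      = (1 / (2 * π) : ℂ) *
          ∫ y in (-π)..π, (fejerKernel n y : ℂ) * g (2 * π * k / n - y) a b :=
  diagonal_block_dft_toeplitz_general g hmeas hbdd hper n k a b
end
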